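/- Let r ≥ 1, let L ≥ 1 be an integer with Δ = 2^L, let d, k ∈ ℤ_{≥1}, ε, η ∈ (0,0.5), and let Q ⊆ [Δ]^d be finite. Let o > 0 satisfy o ≤ min_{Z⊆[Δ]^d, |Z|=k} cost^{(r)}(Q,Z). For i ∈ {−1,0,…,L} set g_i = Δ/2^i and T_i = 0.01·o/(√d·g_i)^r, and set γ = min( η/(8·2^r·kL), ε/(4000·2^{2r}·(k+d^{1.5r})·L) ). Suppose Q^N ⊆ Q is a union Q^N = ⋃_{i=0}^{L} ⋃_{P∈𝒫_i^N} P of pairwise disjoint parts such that: Σ_{i=0}^L |𝒫_i^N| ≤ 20000(k+d^{1.5r})L; every P ∈ 𝒫_i^N satisfies |P| ≤ 2γT_i; every P ∈ 𝒫_i^N is contained in an axis-aligned cube C_P of side length g_{i−1} = 2g_i, the cubes {C_P : P ∈ 𝒫_i^N} are pairwise disjoint for each fixed i, and every such cube satisfies |C_P ∩ Q| ≥ 0.5·T_{i−1} and |C_P ∩ (Q∖Q^N)| ≥ 0.25·T_{i−1}. Then for every t ≥ |Q|/k and every Z ⊆ [Δ]^d with |Z| = k: cost^{(r)}_t(Q∖Q^N,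 Z) ≤ cost^{(r)}_t(Q,Z) and cost^{(r)}_{(1+η)t}(Q,Z) ≤ (1+ε)·cost^{(r)}_t(Q∖Q^N, Z). -/

import Mathlib

open scoped ENNReal Classical

noncomputable section

/-- Points of `ℝ^d` with the Euclidean metric. -/
abbrev Pt (d : ℕ) := EuclideanSpace ℝ (Fin d)

/-- The grid `[Δ]^d = {1,…,Δ}^d`. -/
def gridSet (Δ d : ℕ) : Set (Pt d) :=
  {p | ∀ i : Fin d, ∃ m : ℕ, 1 ≤ m ∧ m ≤ Δ ∧ p i = m}

/-- The capacitated ℓ_r clustering cost `cost^{(r)}_t(Q, Z, w)` of the weighted point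
set `(Q, w)` for the set of centers `Z` with capacity `t`: the minimum of
`Σ_{p∈Q} w(p)·dist(p,π(p))^r` over all assignments `π : Q → Z` in which each center
receives total weight at most `t`, as a value in `ℝ≥0∞` (`⊤` when no feasible
assignment exists). -/
def ccost (r : ℝ) {d : ℕ} (Q : Finset (Pt d)) (w : Pt d → ℝ)
    (Z : Finset (Pt d)) (t : ℝ) : ℝ≥0∞ :=
  ⨅ π : {π : {p // p ∈ Q} → {z // z ∈ Z} //
      ∀ z0 : {z // z ∈ Z}, (∑ p ∈ Q.attach, if π p = z0 then w p.1 else 0) ≤ t},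
    ENNReal.ofReal (∑ p ∈ Q.attach, w p.1 * dist p.1 (π.1 p).1 ^ r)

end

noncomputable section

/-- The axis-aligned cube with corner `a` and side length `s`:
`∏_l [a_l, a_l + s)`. -/
def cube {d : ℕ} (a : Fin d → ℝ) (s : ℝ) : Set (Pt d) :=
  {x | ∀ l : Fin d, a l ≤ x l ∧ x l < a l + s}

end

/-! Deleting `Q^N` cannot increase the cost, since an assignment of `Q` restricts to one of
`Q ∖ Q^N`. Conversely, extend an assignment of `Q ∖ Q^N` by sending every point of a part `P`
(of level `i`) to the center of the cheapest retained point of the cube of `P`. As `|P| ≤ 2γT_i`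
while that cube holds at least `T_i / 2^{r+2}` retained points, the relaxed triangle inequality
`(a + b)^r ≤ 2^{r-1}(a^r + b^r)` bounds the new cost of `P` by `O(γ)·o` plus `O(γ)` times the
cost of the retained points of its cube. The cubes of one level are disjoint, there are few
parts, and `o` is at most the new total cost, so the extra cost is at most `ε` times the old one.
The loads grow by at most `|Q^N|`, and each level has at most `2^{r+1}|Q| / T_i` parts because
their disjoint cubes hold `T_{i-1}/2` points of `Q` each; hence `|Q^N| ≤ ηt`. -/

open Finset

lemma Real.rpow_add_le_mul_rpow_add_rpow {a b r : ℝ} (ha : 0 ≤ a) (hb : 0 ≤ b) (hr : 1 ≤ r) :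
    (a + b) ^ r ≤ 2 ^ (r - 1) * (a ^ r + b ^ r) := by
  lift a to NNReal using ha
  lift b to NNReal using hb
  exact_mod_cast NNReal.rpow_add_le_mul_rpow_add_rpow a b hr

lemma rpow_dist_le_two_rpow_sub_one_mul {α : Type*} [PseudoMetricSpace α] {r : ℝ} (hr : 1 ≤ r)
    (x y z : α) : dist x z ^ r ≤ 2 ^ (r - 1) * (dist x y ^ r + dist y z ^ r) :=
  (Real.rpow_le_rpow dist_nonneg (dist_triangle x y z) (by linarith)).trans
    (Real.rpow_add_le_mul_rpow_add_rpow dist_nonneg dist_nonneg hr)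

lemma sum_rpow_dist_le_of_forall_dist_le {α : Type*} [PseudoMetricSpace α] {r D : ℝ}
    (hr : 1 ≤ r) {P : Finset α} {q z : α} (hD : ∀ p ∈ P, dist p q ≤ D) :
    ∑ p ∈ P, dist p z ^ r ≤ 2 ^ (r - 1) * (#P * (D ^ r + dist q z ^ r)) := by
  calc ∑ p ∈ P, dist p z ^ r ≤ ∑ _p ∈ P, 2 ^ (r - 1) * (D ^ r + dist q z ^ r) := by
        refine sum_le_sum fun p hp => (rpow_dist_le_two_rpow_sub_one_mul hr p q z).trans ?_
        gcongr
        exact hD p hp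
    _ = _ := by rw [sum_const, nsmul_eq_mul]; ring

lemma dist_le_of_mem_cube {d : ℕ} {a : Fin d → ℝ} {s : ℝ} (hs : 0 ≤ s) {x y : Pt d}
    (hx : x ∈ cube a s) (hy : y ∈ cube a s) : dist x y ≤ Real.sqrt d * s := by
  have hcoord : ∀ l, dist (x l) (y l) ^ 2 ≤ s ^ 2 := fun l => by
    have := hx l; have := hy l
    exact pow_le_pow_left₀ dist_nonneg (by rw [Real.dist_eq, abs_le]; constructor <;> linarith) 2
  calc dist x y = Real.sqrt (∑ l, dist (x l) (y l) ^ 2) := EuclideanSpace.dist_eq x y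
    _ ≤ Real.sqrt (∑ _l : Fin d, s ^ 2) := Real.sqrt_le_sqrt (sum_le_sum fun l _ => hcoord l)
    _ = Real.sqrt d * s := by
      rw [sum_const, card_univ, Fintype.card_fin, nsmul_eq_mul, Real.sqrt_mul (Nat.cast_nonneg _),
        Real.sqrt_sq hs]

lemma sum_infDist_rpow_le {α : Type*} [PseudoMetricSpace α] {r : ℝ} (hr : 0 ≤ r)
    {Q Z : Finset α} {f : α → α} (hf : ∀ p ∈ Q, f p ∈ Z) :
    ∑ p ∈ Q, Metric.infDist p (Z : Set α) ^ r ≤ ∑ p ∈ Q, dist p (f p) ^ r :=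
  sum_le_sum fun p hp => Real.rpow_le_rpow Metric.infDist_nonneg
    (Metric.infDist_le_dist_of_mem (mem_coe.2 (hf p hp))) hr

lemma sum_sum_filter_mem_le {ι α : Type*} {s : Finset ι} {U : ι → Set α}
    (hU : (s : Set ι).PairwiseDisjoint U) {R : Finset α} {c : α → ℝ} (hc : ∀ p ∈ R, 0 ≤ c p) :
    ∑ x ∈ s, ∑ p ∈ R with p ∈ U x, c p ≤ ∑ p ∈ R, c p := by
  have hdisj : (s : Set ι).PairwiseDisjoint fun x => {p ∈ R | p ∈ U x} :=
    fun x hx y hy hxy => disjoint_left.2 fun p hpx hpy =>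
      Set.disjoint_left.1 (hU hx hy hxy) (mem_filter.1 hpx).2 (mem_filter.1 hpy).2
  rw [← sum_biUnion hdisj]
  exact sum_le_sum_of_subset_of_nonneg (biUnion_subset.2 fun x _ => filter_subset _ _)
    fun p hp _ => hc p hp

lemma exists_eq_on_parts {ι α : Type*} {s : Finset ι} {P : ι → Finset α}
    (hP : (s : Set ι).PairwiseDisjoint P) (q : ∀ x ∈ s, α) :
    ∃ ρ : α → α, (∀ x (hx : x ∈ s), ∀ p ∈ P x, ρ p = q x hx) ∧
      ∀ p, (∀ x ∈ s, p ∉ P x) → ρ p = p := by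
  refine ⟨fun p => if h : ∃ x, ∃ hx : x ∈ s, p ∈ P x then q h.choose h.choose_spec.choose else p,
    fun x hx p hp => ?_, fun p hp => dif_neg fun ⟨x, hx, hpx⟩ => hp x hx hpx⟩
  have h : ∃ x, ∃ hx : x ∈ s, p ∈ P x := ⟨x, hx, hp⟩
  have hq : ∀ y (hy : y ∈ s), y = x → q y hy = q x hx := by rintro y hy rfl; rfl
  obtain ⟨hy, hpy⟩ := h.choose_spec
  simpa only [dif_pos h] using hq _ _ (hP.elim_finset hy hx p hpy hp)

lemma eq_biUnion_sigma_snd {ι α : Type*} [Fintype ι] [DecidableEq α] {N : Finset α}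
    {Ps : ι → Finset (Finset α)} (h : (N : Set α) = ⋃ i, ⋃ P ∈ Ps i, (P : Set α)) :
    N = (univ.sigma Ps).biUnion Sigma.snd := by
  ext p
  simpa using Set.ext_iff.1 h p

lemma pairwiseDisjoint_sigma_snd {ι α : Type*} {s : Finset ι} {Ps : ι → Finset (Finset α)}
    (h : ∀ i j, ∀ P ∈ Ps i, ∀ P' ∈ Ps j, (i ≠ j ∨ P ≠ P') → Disjoint P P') :
    ((s.sigma Ps : Finset ((_ : ι) × Finset α)) : Set ((_ : ι) × Finset α)).PairwiseDisjoint
      Sigma.snd := fun x hx y hy hxy =>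
  h x.1 y.1 x.2 (mem_sigma.1 hx).2 y.2 (mem_sigma.1 hy).2 (by
    contrapose! hxy
    exact Sigma.ext hxy.1 (heq_of_eq hxy.2))

lemma ccost_one_le_ofReal_mul {r : ℝ} {d : ℕ} {Q Q' Z : Finset (Pt d)} {t t' c : ℝ} (hc : 0 < c)
    (h : ∀ f : Pt d → Pt d, (∀ p ∈ Q', f p ∈ Z) → (∀ z ∈ Z, (#{p ∈ Q' | f p = z} : ℝ) ≤ t') →
      ∃ g : Pt d → Pt d, (∀ p ∈ Q, g p ∈ Z) ∧ (∀ z ∈ Z, (#{p ∈ Q | g p = z} : ℝ) ≤ t) ∧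
        ∑ p ∈ Q, dist p (g p) ^ r ≤ c * ∑ p ∈ Q', dist p (f p) ^ r) :
    ccost r Q (fun _ => 1) Z t ≤ ENNReal.ofReal c * ccost r Q' (fun _ => 1) Z t' := by
  unfold ccost
  rw [ENNReal.mul_iInf_of_ne (by simpa using hc) ENNReal.ofReal_ne_top]
  refine le_iInf fun ⟨π, hπ⟩ => ?_
  set f : Pt d → Pt d := fun p => if hp : p ∈ Q' then (π ⟨p, hp⟩).1 else p
  have hf : ∀ p : {p // p ∈ Q'}, f p = (π p).1 := fun p => dif_pos p.2
  obtain ⟨g, hgZ, hgload, hgcost⟩ := h f (fun p hp => by simp [f, hp]) fun z hz => by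
    calc (#{p ∈ Q' | f p = z} : ℝ) = ∑ p ∈ Q', if f p = z then 1 else 0 := by rw [sum_boole]
      _ = ∑ p ∈ Q'.attach, if π p = ⟨z, hz⟩ then 1 else 0 := by
        rw [← sum_attach]; exact sum_congr rfl fun p _ => by simp [hf, Subtype.ext_iff]
      _ ≤ t' := hπ ⟨z, hz⟩
  refine (iInf_le _ ⟨fun p => ⟨g p, hgZ p p.2⟩, fun z => ?_⟩).trans ?_
  · rw [← ENNReal.ofReal_mul hc.le]
    refine ENNReal.ofReal_le_ofReal ?_
    simp only [one_mul, ← hf]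
    rwa [sum_attach Q (fun p => dist p (g p) ^ r), sum_attach Q' (fun p => dist p (f p) ^ r)]
  · simp only [Subtype.ext_iff]
    rw [sum_attach Q (fun p => if g p = z.1 then (1 : ℝ) else 0), sum_boole]
    exact hgload z z.2

lemma ccost_one_mono {r : ℝ} {d : ℕ} {Q' Q : Finset (Pt d)} (h : Q' ⊆ Q) (Z : Finset (Pt d))
    (t : ℝ) : ccost r Q' (fun _ => 1) Z t ≤ ccost r Q (fun _ => 1) Z t := by
  simpa using ccost_one_le_ofReal_mul one_pos fun f hfZ hload =>
    ⟨f, fun p hp => hfZ p (h hp),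
      fun z hz => le_trans (by exact_mod_cast card_le_card (filter_subset_filter _ h)) (hload z hz),
      by rw [one_mul]; exact sum_le_sum_of_subset_of_nonneg h fun p _ _ => by positivity⟩

/-- `ρ` sends every point of a part `P x` to the point of `B x` that is cheapest under `f`. -/
lemma exists_reassign_parts {α ι : Type*} [PseudoMetricSpace α] [DecidableEq α] {r : ℝ}
    (hr : 1 ≤ r) {Q N : Finset α} {s : Finset ι} {P B : ι → Finset α} {D : ι → ℝ} (hNQ : N ⊆ Q)
    (hN : N = s.biUnion P) (hP : (s : Set ι).PairwiseDisjoint P)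
    (hB : ∀ x ∈ s, B x ⊆ Q \ N) (hBne : ∀ x ∈ s, (B x).Nonempty)
    (hD : ∀ x ∈ s, ∀ p ∈ P x, ∀ b ∈ B x, dist p b ≤ D x) (f : α → α) :
    ∃ ρ : α → α, (∀ p ∈ Q, ρ p ∈ Q \ N) ∧
      (∀ z, #{p ∈ Q | f (ρ p) = z} ≤ #{p ∈ Q \ N | f p = z} + #N) ∧
      ∑ p ∈ Q, dist p (f (ρ p)) ^ r ≤ ∑ p ∈ Q \ N, dist p (f p) ^ r +
        2 ^ (r - 1) * ∑ x ∈ s, #(P x) * (D x ^ r + (∑ b ∈ B x, dist b (f b) ^ r) / #(B x)) := by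
  set c : α → ℝ := fun b => dist b (f b) ^ r
  choose q hqB hqmin using fun x hx => (B x).exists_min_image c (hBne x hx)
  obtain ⟨ρ, hρP, hρ⟩ := exists_eq_on_parts hP q
  have hρN : ∀ p ∉ N, ρ p = p := fun p hp =>
    hρ p fun x hx hpx => hp (hN ▸ mem_biUnion.2 ⟨x, hx, hpx⟩)
  refine ⟨ρ, fun p hp => ?_, fun z => ?_, ?_⟩
  · by_cases hpN : p ∈ N
    · obtain ⟨x, hx, hpx⟩ := mem_biUnion.1 (hN ▸ hpN)
      rw [hρP x hx p hpx]
      exact hB x hx (hqB x hx)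
    · rw [hρN p hpN]
      exact mem_sdiff.2 ⟨hp, hpN⟩
  · refine (card_le_card fun p hp => ?_).trans (card_union_le _ _)
    obtain ⟨hpQ, hpz⟩ := mem_filter.1 hp
    by_cases hpN : p ∈ N
    · exact mem_union_right _ hpN
    · exact mem_union_left _ (mem_filter.2 ⟨mem_sdiff.2 ⟨hpQ, hpN⟩, hρN p hpN ▸ hpz⟩)
  · have hpart : ∀ x (hx : x ∈ s), ∑ p ∈ P x, dist p (f (ρ p)) ^ r ≤
        2 ^ (r - 1) * (#(P x) * (D x ^ r + (∑ b ∈ B x, c b) / #(B x))) := fun x hx => by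
      have hcq : c (q x hx) ≤ (∑ b ∈ B x, c b) / #(B x) := by
        rw [le_div_iff₀ (by exact_mod_cast (hBne x hx).card_pos), mul_comm]
        simpa using card_nsmul_le_sum (B x) c _ (hqmin x hx)
      calc ∑ p ∈ P x, dist p (f (ρ p)) ^ r = ∑ p ∈ P x, dist p (f (q x hx)) ^ r :=
            sum_congr rfl fun p hp => by rw [hρP x hx p hp]
        _ ≤ 2 ^ (r - 1) * (#(P x) * (D x ^ r + c (q x hx))) :=
            sum_rpow_dist_le_of_forall_dist_le hr fun p hp => hD x hx p hp _ (hqB x hx)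
        _ ≤ _ := by gcongr
    rw [← sum_sdiff hNQ, sum_congr rfl fun p hp => by rw [hρN p (mem_sdiff.1 hp).2], mul_sum]
    gcongr
    rw [hN, sum_biUnion hP]
    exact sum_le_sum fun x hx => hpart x hx

lemma part_extra_cost_le {γ T H X o S n m : ℝ} (hX : 0 < X) (hT : 0 < T) (hS : 0 ≤ S)
    (hn0 : 0 ≤ n) (hn : n ≤ 2 * γ * T) (hm : 0.25 * (T / X) ≤ m) (hH : 0 ≤ H)
    (hTH : T * H ≤ X * (0.01 * o)) :
    n * (H + S / m) ≤ 0.02 * γ * X * o + 8 * γ * X * S := by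
  have hγ : 0 ≤ γ := by nlinarith
  have hm0 : 0 < m := lt_of_lt_of_le (by positivity) hm
  have hTm : T ≤ 4 * X * m := by
    rw [mul_div_assoc', div_le_iff₀ hX] at hm; linarith
  have hH : n * H ≤ 0.02 * γ * X * o := by
    nlinarith [mul_le_mul_of_nonneg_right hn hH]
  have hS : n * (S / m) ≤ 8 * γ * X * S := by
    rw [mul_div_assoc', div_le_iff₀ hm0]
    calc n * S ≤ 2 * γ * T * S := mul_le_mul_of_nonneg_right hn hS
      _ ≤ 2 * γ * (4 * X * m) * S := by gcongr
      _ = 8 * γ * X * S * m := by ring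
  linarith [mul_add n H (S / m)]

lemma sum_parts_extra_cost_le {ι α : Type*} [Fintype ι] {Ps : ι → Finset (Finset α)}
    {U : ι → Finset α → Set α} {R : Finset α} {c : α → ℝ} {T H : ι → ℝ} {X γ o M : ℝ}
    (hU : ∀ i, (Ps i : Set (Finset α)).PairwiseDisjoint (U i)) (hc : ∀ p ∈ R, 0 ≤ c p)
    (hX : 0 < X) (hγ : 0 ≤ γ) (ho : 0 ≤ o) (hT : ∀ i, 0 < T i) (hH : ∀ i, 0 ≤ H i)
    (hTH : ∀ i, T i * H i ≤ X * (0.01 * o))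
    (hsmall : ∀ i, ∀ P ∈ Ps i, (#P : ℝ) ≤ 2 * γ * T i)
    (hfull : ∀ i, ∀ P ∈ Ps i, 0.25 * (T i / X) ≤ #{p ∈ R | p ∈ U i P})
    (hnum : ∑ i, (#(Ps i) : ℝ) ≤ M) :
    ∑ x ∈ univ.sigma Ps, #x.2 *
        (H x.1 + (∑ p ∈ R with p ∈ U x.1 x.2, c p) / #{p ∈ R | p ∈ U x.1 x.2}) ≤
      0.02 * γ * X * o * M + 8 * γ * X * Fintype.card ι * ∑ p ∈ R, c p := by
  rw [sum_sigma]
  calc _ ≤ ∑ i, ∑ P ∈ Ps i, (0.02 * γ * X * o + 8 * γ * X * ∑ p ∈ R with p ∈ U i P, c p) :=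
        sum_le_sum fun i _ => sum_le_sum fun P hP =>
          part_extra_cost_le hX (hT i) (sum_nonneg fun p hp => hc p (mem_filter.1 hp).1)
            (by positivity) (hsmall i P hP) (hfull i P hP) (hH i) (hTH i)
    _ = ∑ i, (#(Ps i) * (0.02 * γ * X * o) +
          8 * γ * X * ∑ P ∈ Ps i, ∑ p ∈ R with p ∈ U i P, c p) := by
        simp only [sum_add_distrib, sum_const, nsmul_eq_mul, mul_sum]
    _ ≤ ∑ i, (#(Ps i) * (0.02 * γ * X * o) + 8 * γ * X * ∑ p ∈ R, c p) := by
        gcongr with i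
        exact sum_sum_filter_mem_le (hU i) hc
    _ ≤ _ := by
        rw [sum_add_distrib, ← sum_mul, sum_const, card_univ, nsmul_eq_mul]
        nlinarith [mul_le_mul_of_nonneg_right hnum (by positivity : 0 ≤ 0.02 * γ * X * o)]

lemma exists_reassign_small_parts {ι α : Type*} [Fintype ι] [PseudoMetricSpace α] [DecidableEq α]
    {r X γ o M : ℝ} (hr : 1 ≤ r) {Q N : Finset α} {Ps : ι → Finset (Finset α)}
    {U : ι → Finset α → Set α} {T D : ι → ℝ} (hNQ : N ⊆ Q)
    (hN : N = (univ.sigma Ps).biUnion Sigma.snd)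
    (hP : ((univ.sigma Ps : Finset _) : Set ((_ : ι) × Finset α)).PairwiseDisjoint Sigma.snd)
    (hU : ∀ i, (Ps i : Set (Finset α)).PairwiseDisjoint (U i))
    (hPU : ∀ i, ∀ P ∈ Ps i, (P : Set α) ⊆ U i P)
    (hUD : ∀ i, ∀ P ∈ Ps i, ∀ p ∈ U i P, ∀ q ∈ U i P, dist p q ≤ D i) (hD : ∀ i, 0 ≤ D i)
    (hX : 0 < X) (hγ : 0 ≤ γ) (ho : 0 ≤ o) (hT : ∀ i, 0 < T i)
    (hTD : ∀ i, T i * D i ^ r ≤ X * (0.01 * o))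
    (hsmall : ∀ i, ∀ P ∈ Ps i, (#P : ℝ) ≤ 2 * γ * T i)
    (hfull : ∀ i, ∀ P ∈ Ps i, 0.25 * (T i / X) ≤ #{p ∈ Q \ N | p ∈ U i P})
    (hnum : ∑ i, (#(Ps i) : ℝ) ≤ M) (f : α → α) :
    ∃ ρ : α → α, (∀ p ∈ Q, ρ p ∈ Q \ N) ∧
      (∀ z, #{p ∈ Q | f (ρ p) = z} ≤ #{p ∈ Q \ N | f p = z} + #N) ∧
      ∑ p ∈ Q, dist p (f (ρ p)) ^ r ≤ ∑ p ∈ Q \ N, dist p (f p) ^ r + 2 ^ (r - 1) *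
        (0.02 * γ * X * o * M + 8 * γ * X * Fintype.card ι * ∑ p ∈ Q \ N, dist p (f p) ^ r) := by
  have hBne : ∀ x ∈ univ.sigma Ps, ({p ∈ Q \ N | p ∈ U x.1 x.2} : Finset α).Nonempty :=
    fun x hx => by
      rw [← card_pos, ← Nat.cast_pos (α := ℝ)]
      have := hT x.1
      exact lt_of_lt_of_le (by positivity) (hfull x.1 x.2 (mem_sigma.1 hx).2)
  obtain ⟨ρ, hρQ, hρload, hρcost⟩ := exists_reassign_parts (D := fun x => D x.1) hr hNQ hN hP
    (fun _ _ _ hp => (mem_filter.1 hp).1) hBne (fun x hx p hp b hb =>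
      hUD x.1 x.2 (mem_sigma.1 hx).2 p (hPU x.1 x.2 (mem_sigma.1 hx).2 hp) b (mem_filter.1 hb).2) f
  refine ⟨ρ, hρQ, hρload, hρcost.trans (add_le_add le_rfl (mul_le_mul_of_nonneg_left ?_
    (by positivity)))⟩
  exact sum_parts_extra_cost_le hU (fun _ _ => by positivity) hX hγ ho hT
    (fun i => by have := hD i; positivity) hTD hsmall hfull hnum

lemma card_le_of_small_parts {ι α : Type*} [Fintype ι] [DecidableEq α]
    {Ps : ι → Finset (Finset α)} {U : ι → Finset α → Set α} {Q N : Finset α} {T : ι → ℝ}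
    {X γ : ℝ} (hN : N = (univ.sigma Ps).biUnion Sigma.snd)
    (hU : ∀ i, (Ps i : Set (Finset α)).PairwiseDisjoint (U i)) (hX : 0 < X) (hγ : 0 ≤ γ)
    (hsmall : ∀ i, ∀ P ∈ Ps i, (#P : ℝ) ≤ 2 * γ * T i)
    (hfull : ∀ i, ∀ P ∈ Ps i, 0.5 * (T i / X) ≤ #{p ∈ Q | p ∈ U i P}) :
    (#N : ℝ) ≤ Fintype.card ι * (4 * γ * X * #Q) := by
  have hlevel : ∀ i, ∑ P ∈ Ps i, (#P : ℝ) ≤ 4 * γ * X * #Q := fun i => by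
    calc ∑ P ∈ Ps i, (#P : ℝ) ≤ ∑ P ∈ Ps i, 4 * γ * X * ∑ p ∈ Q with p ∈ U i P, (1 : ℝ) := by
          refine sum_le_sum fun P hP => ?_
          rw [sum_const, nsmul_one]
          calc (#P : ℝ) ≤ 4 * γ * X * (0.5 * (T i / X)) := by
                rw [show 4 * γ * X * (0.5 * (T i / X)) = 2 * γ * T i by field_simp; ring]
                exact hsmall i P hP
            _ ≤ _ := by gcongr; exact hfull i P hP
      _ ≤ 4 * γ * X * #Q := by
          rw [← mul_sum, ← nsmul_one, ← sum_const]
          gcongr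
          exact sum_sum_filter_mem_le (hU i) fun _ _ => zero_le_one
  calc (#N : ℝ) ≤ ∑ x ∈ univ.sigma Ps, (#x.2 : ℝ) := by rw [hN]; exact_mod_cast card_biUnion_le
    _ ≤ ∑ _i : ι, 4 * γ * X * #Q := by rw [sum_sigma]; exact sum_le_sum fun i _ => hlevel i
    _ = _ := by rw [sum_const, card_univ, nsmul_eq_mul]

/-- `threshold r d o g` is the paper's `T_i` when `g = g_i`. -/
noncomputable def threshold (r : ℝ) (d : ℕ) (o g : ℝ) : ℝ := 0.01 * o / (Real.sqrt d * g) ^ r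

lemma threshold_pos {r o g : ℝ} {d : ℕ} (ho : 0 < o) (hd : 0 < d) (hg : 0 < g) :
    0 < threshold r d o g := by
  unfold threshold; positivity

lemma rpow_mul_two_mul {a g r : ℝ} (ha : 0 ≤ a) (hg : 0 ≤ g) :
    (a * (2 * g)) ^ r = 2 ^ r * (a * g) ^ r := by
  rw [mul_left_comm, Real.mul_rpow zero_le_two (by positivity)]

lemma threshold_two_mul {r o g : ℝ} {d : ℕ} (hg : 0 ≤ g) :
    threshold r d o (2 * g) = threshold r d o g / 2 ^ r := by
  rw [threshold, threshold, rpow_mul_two_mul (by positivity) hg, mul_comm (2 ^ r), div_div]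

lemma threshold_mul_rpow_two_mul {r o g : ℝ} {d : ℕ} (hd : 0 < d) (hg : 0 < g) :
    threshold r d o g * (Real.sqrt d * (2 * g)) ^ r = 2 ^ r * (0.01 * o) := by
  rw [rpow_mul_two_mul (by positivity) hg.le, mul_left_comm, threshold,
    div_mul_cancel₀ _ (by positivity)]

lemma nonneg_and_mul_le_of_eq_min_div {γ a b A B : ℝ} (ha : 0 ≤ a) (hb : 0 ≤ b) (hA : 0 < A)
    (hB : 0 < B) (h : γ = min (a / A) (b / B)) : 0 ≤ γ ∧ A * γ ≤ a ∧ B * γ ≤ b :=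
  ⟨h ▸ le_min (by positivity) (by positivity), (le_div_iff₀' hA).1 (h ▸ min_le_left _ _),
    (le_div_iff₀' hB).1 (h ▸ min_le_right _ _)⟩

lemma le_one_add_mul_of_le_add {x C a b ε : ℝ} (h : x ≤ C + a * x + b * C) (ha : 0 ≤ a)
    (hb : 0 ≤ b) (hC : 0 ≤ C) (hε : ε ≤ 1) (hab : 2 * a + b ≤ ε) : x ≤ (1 + ε) * C := by
  have ha' : a ≤ 1 / 2 := by linarith
  nlinarith [mul_nonneg ha hC, mul_nonneg (sub_nonneg.2 hε) (mul_nonneg ha hC)]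

lemma le_one_add_mul_of_extra_cost_le {x C o γ X K L ε : ℝ}
    (hx : x ≤ C + X / 2 * (0.02 * γ * X * o * (20000 * K * L) + 8 * γ * X * (L + 1) * C))
    (ho : o ≤ x) (hγ : 0 ≤ γ) (hK : 1 ≤ K) (hL : 1 ≤ L) (hC : 0 ≤ C) (hε : ε ≤ 1)
    (hγε : 4000 * X ^ 2 * K * L * γ ≤ ε) : x ≤ (1 + ε) * C := by
  have hKL : 0 ≤ K * L := by nlinarith
  have ha : 0 ≤ 200 * γ * X ^ 2 * (K * L) := by positivity
  have hL2 : γ * X ^ 2 * (L + 1) ≤ γ * X ^ 2 * (2 * (K * L)) := by gcongr; nlinarith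
  refine le_one_add_mul_of_le_add (a := 200 * γ * X ^ 2 * (K * L)) (b := 4 * γ * X ^ 2 * (L + 1))
    ?_ ha (mul_nonneg (by positivity) (by linarith)) hC hε (by linarith)
  nlinarith [mul_le_mul_of_nonneg_left ho ha]

theorem stmt14_general (r : ℝ) (hr : 1 ≤ r) (L Δ d k : ℕ) (hL : 1 ≤ L) (hΔ : Δ = 2 ^ L)
    (hd : 1 ≤ d) (hk : 1 ≤ k)
    (ε η : ℝ) (hε : ε ∈ Set.Ioo (0:ℝ) 0.5) (hη : η ∈ Set.Ioo (0:ℝ) 0.5)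
    (Q : Finset (Pt d))
    (o : ℝ) (ho : 0 < o)
    (hoOPT : ∀ Z : Finset (Pt d), ↑Z ⊆ gridSet Δ d → Z.card = k →
        o ≤ ∑ p ∈ Q, Metric.infDist p (↑Z : Set (Pt d)) ^ r)
    (γ : ℝ) (hγ : γ = min (η / (8 * (2:ℝ) ^ r * k * L))
        (ε / (4000 * (2:ℝ) ^ (2 * r) * ((k:ℝ) + (d:ℝ) ^ (1.5 * r)) * L)))
    (Ps : Fin (L + 1) → Finset (Finset (Pt d)))
    (QN : Finset (Pt d)) (hQNQ : QN ⊆ Q)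
    (hQN : (↑QN : Set (Pt d)) = ⋃ i : Fin (L + 1), ⋃ P ∈ Ps i, (↑P : Set (Pt d)))
    (hpdisj : ∀ i j : Fin (L + 1), ∀ P ∈ Ps i, ∀ P' ∈ Ps j,
        (i ≠ j ∨ P ≠ P') → Disjoint P P')
    (hnum : (∑ i : Fin (L + 1), ((Ps i).card : ℝ)) ≤
        20000 * ((k:ℝ) + (d:ℝ) ^ (1.5 * r)) * L)
    (hsmall : ∀ i : Fin (L + 1), ∀ P ∈ Ps i,
        (P.card : ℝ) ≤ 2 * γ * (0.01 * o / (Real.sqrt d * ((Δ:ℝ) / 2 ^ (i:ℕ))) ^ r))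
    (A : Fin (L + 1) → Finset (Pt d) → (Fin d → ℝ))
    (hcube : ∀ i : Fin (L + 1), ∀ P ∈ Ps i,
        (↑P : Set (Pt d)) ⊆ cube (A i P) (2 * ((Δ:ℝ) / 2 ^ (i:ℕ))))
    (hcubedisj : ∀ i : Fin (L + 1), ∀ P ∈ Ps i, ∀ P' ∈ Ps i, P ≠ P' →
        Disjoint (cube (A i P) (2 * ((Δ:ℝ) / 2 ^ (i:ℕ))))
          (cube (A i P') (2 * ((Δ:ℝ) / 2 ^ (i:ℕ)))))
    (hfull : ∀ i : Fin (L + 1), ∀ P ∈ Ps i,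
        0.5 * (0.01 * o / (Real.sqrt d * (2 * (Δ:ℝ) / 2 ^ (i:ℕ))) ^ r) ≤
          ((Q.filter fun p => p ∈ cube (A i P) (2 * ((Δ:ℝ) / 2 ^ (i:ℕ)))).card : ℝ))
    (hfull' : ∀ i : Fin (L + 1), ∀ P ∈ Ps i,
        0.25 * (0.01 * o / (Real.sqrt d * (2 * (Δ:ℝ) / 2 ^ (i:ℕ))) ^ r) ≤
          (((Q \ QN).filter fun p =>
              p ∈ cube (A i P) (2 * ((Δ:ℝ) / 2 ^ (i:ℕ)))).card : ℝ)) :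
    ∀ t : ℝ, (Q.card : ℝ) / k ≤ t →
      ∀ Z : Finset (Pt d), ↑Z ⊆ gridSet Δ d → Z.card = k →
        ccost r (Q \ QN) (fun _ => 1) Z t ≤ ccost r Q (fun _ => 1) Z t ∧
        ccost r Q (fun _ => 1) Z ((1 + η) * t) ≤
          ENNReal.ofReal (1 + ε) * ccost r (Q \ QN) (fun _ => 1) Z t := by
  intro t ht Z hZ hZk
  refine ⟨ccost_one_mono sdiff_subset Z t, ?_⟩
  set X : ℝ := 2 ^ r with hX
  set K : ℝ := k + d ^ (1.5 * r)
  set g : Fin (L + 1) → ℝ := fun i => Δ / 2 ^ (i : ℕ)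
  have hk1 : (1 : ℝ) ≤ k := by exact_mod_cast hk
  have hL1 : (1 : ℝ) ≤ L := by exact_mod_cast hL
  have hg : ∀ i, 0 < g i := fun i => by simp only [g, hΔ]; positivity
  obtain ⟨hγ0, hγη, hγε⟩ :=
    nonneg_and_mul_le_of_eq_min_div hη.1.le hε.1.le (by positivity) (by positivity) hγ
  rw [two_mul r, Real.rpow_add two_pos, ← sq] at hγε
  have hT2 : ∀ i : Fin (L + 1), 0.01 * o / (Real.sqrt d * (2 * (Δ : ℝ) / 2 ^ (i : ℕ))) ^ r =
      threshold r d o (g i) / X := fun i => by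
    rw [mul_div_assoc (2 : ℝ)]; exact threshold_two_mul (hg i).le
  have hN := eq_biUnion_sigma_snd hQN
  have hcubes : ∀ i, (Ps i : Set (Finset (Pt d))).PairwiseDisjoint
      fun P => cube (A i P) (2 * g i) := fun i P hP P' hP' => hcubedisj i P hP P' hP'
  have hcard : (#QN : ℝ) ≤ η * t := by
    have hQt : (#Q : ℝ) ≤ k * t := by rwa [div_le_iff₀' (by positivity)] at ht
    calc (#QN : ℝ) ≤ (L + 1) * (4 * γ * X * #Q) := by
          simpa using card_le_of_small_parts hN hcubes (by positivity) hγ0 hsmall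
            fun i P hP => hT2 i ▸ hfull i P hP
      _ ≤ 2 * L * (4 * γ * X * (k * t)) := by gcongr; linarith
      _ = 8 * X * k * L * γ * t := by ring
      _ ≤ η * t := by gcongr; exact (div_nonneg (by positivity) (by positivity)).trans ht
  refine ccost_one_le_ofReal_mul (by linarith [hε.1]) fun f hfZ hload => ?_
  obtain ⟨ρ, hρQ, hρload, hρcost⟩ := exists_reassign_small_parts
    (D := fun i => Real.sqrt d * (2 * g i)) hr hQNQ hN (pairwiseDisjoint_sigma_snd hpdisj) hcubes
    hcube (fun i _ _ p hp q hq => dist_le_of_mem_cube (by linarith [hg i]) hp hq)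
    (fun i => by have := hg i; positivity) (by positivity) hγ0 ho.le
    (fun i => threshold_pos ho hd (hg i)) (fun i => (threshold_mul_rpow_two_mul hd (hg i)).le)
    hsmall (fun i P hP => hT2 i ▸ hfull' i P hP) hnum f
  refine ⟨f ∘ ρ, fun p hp => hfZ _ (hρQ p hp), fun z hz => ?_, ?_⟩
  · calc (#{p ∈ Q | (f ∘ ρ) p = z} : ℝ) ≤ #{p ∈ Q \ QN | f p = z} + #QN := by
          exact_mod_cast hρload z
      _ ≤ (1 + η) * t := by linarith [hload z hz]
  · rw [Real.rpow_sub_one two_ne_zero, ← hX, Fintype.card_fin, Nat.cast_succ] at hρcost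
    exact le_one_add_mul_of_extra_cost_le hρcost
      ((hoOPT Z hZ hZk).trans (sum_infDist_rpow_le (by linarith) fun p hp => hfZ _ (hρQ p hp)))
      hγ0 (le_add_of_le_of_nonneg hk1 (by positivity)) hL1 (sum_nonneg fun _ _ => by positivity)
      (by linarith [hε.2]) hγε

/-- **Lemma 3.4 (Removal of small parts does not change the capacitated cost by
much).** Let `o` be a lower bound on the optimal (uncapacitated) ℓ_r `k`-clustering
cost, `T_i = 0.01·o/(√d·g_i)^r` with `g_i = Δ/2^i`, and
`γ = min(η/(8·2^r kL), ε/(4000·2^{2r}(k+d^{1.5r})L))`. Let `Q^N ⊆ Q` be a union of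
pairwise disjoint parts `Ps_0,…,Ps_L`, at most `20000(k+d^{1.5r})L` in total, each part
of level `i` having at most `2γT_i` points and lying in a cube of side `2g_i`
(cubes of the same level pairwise disjoint) that contains at least `0.5·T_{i−1}`
points of `Q` and at least `0.25·T_{i−1}` points of `Q∖Q^N`. Then for every
`t ≥ |Q|/k` and every `Z ⊆ [Δ]^d` with `|Z| = k`,
`cost^{(r)}_t(Q∖Q^N,Z) ≤ cost^{(r)}_t(Q,Z)` and
`cost^{(r)}_{(1+η)t}(Q,Z) ≤ (1+ε)·cost^{(r)}_t(Q∖Q^N,Z)`. -/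
theorem stmt14 (r : ℝ) (hr : 1 ≤ r) (L Δ d k : ℕ) (hL : 1 ≤ L) (hΔ : Δ = 2 ^ L)
    (hd : 1 ≤ d) (hk : 1 ≤ k)
    (ε η : ℝ) (hε : ε ∈ Set.Ioo (0:ℝ) 0.5) (hη : η ∈ Set.Ioo (0:ℝ) 0.5)
    (Q : Finset (Pt d)) (hQ : ↑Q ⊆ gridSet Δ d)
    (o : ℝ) (ho : 0 < o)
    (hoOPT : ∀ Z : Finset (Pt d), ↑Z ⊆ gridSet Δ d → Z.card = k →
        o ≤ ∑ p ∈ Q, Metric.infDist p (↑Z : Set (Pt d)) ^ r)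
    (γ : ℝ) (hγ : γ = min (η / (8 * (2:ℝ) ^ r * k * L))
        (ε / (4000 * (2:ℝ) ^ (2 * r) * ((k:ℝ) + (d:ℝ) ^ (1.5 * r)) * L)))
    (Ps : Fin (L + 1) → Finset (Finset (Pt d)))
    (QN : Finset (Pt d)) (hQNQ : QN ⊆ Q)
    (hQN : (↑QN : Set (Pt d)) = ⋃ i : Fin (L + 1), ⋃ P ∈ Ps i, (↑P : Set (Pt d)))
    (hpdisj : ∀ i j : Fin (L + 1), ∀ P ∈ Ps i, ∀ P' ∈ Ps j,
        (i ≠ j ∨ P ≠ P') → Disjoint P P')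
    (hnum : (∑ i : Fin (L + 1), ((Ps i).card : ℝ)) ≤
        20000 * ((k:ℝ) + (d:ℝ) ^ (1.5 * r)) * L)
    (hsmall : ∀ i : Fin (L + 1), ∀ P ∈ Ps i,
        (P.card : ℝ) ≤ 2 * γ * (0.01 * o / (Real.sqrt d * ((Δ:ℝ) / 2 ^ (i:ℕ))) ^ r))
    (A : Fin (L + 1) → Finset (Pt d) → (Fin d → ℝ))
    (hcube : ∀ i : Fin (L + 1), ∀ P ∈ Ps i,
        (↑P : Set (Pt d)) ⊆ cube (A i P) (2 * ((Δ:ℝ) / 2 ^ (i:ℕ))))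
    (hcubedisj : ∀ i : Fin (L + 1), ∀ P ∈ Ps i, ∀ P' ∈ Ps i, P ≠ P' →
        Disjoint (cube (A i P) (2 * ((Δ:ℝ) / 2 ^ (i:ℕ))))
          (cube (A i P') (2 * ((Δ:ℝ) / 2 ^ (i:ℕ)))))
    (hfull : ∀ i : Fin (L + 1), ∀ P ∈ Ps i,
        0.5 * (0.01 * o / (Real.sqrt d * (2 * (Δ:ℝ) / 2 ^ (i:ℕ))) ^ r) ≤
          ((Q.filter fun p => p ∈ cube (A i P) (2 * ((Δ:ℝ) / 2 ^ (i:ℕ)))).card : ℝ))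
    (hfull' : ∀ i : Fin (L + 1), ∀ P ∈ Ps i,
        0.25 * (0.01 * o / (Real.sqrt d * (2 * (Δ:ℝ) / 2 ^ (i:ℕ))) ^ r) ≤
          (((Q \ QN).filter fun p =>
              p ∈ cube (A i P) (2 * ((Δ:ℝ) / 2 ^ (i:ℕ)))).card : ℝ)) :
    ∀ t : ℝ, (Q.card : ℝ) / k ≤ t →
      ∀ Z : Finset (Pt d), ↑Z ⊆ gridSet Δ d → Z.card = k →
        ccost r (Q \ QN) (fun _ => 1) Z t ≤ ccost r Q (fun _ => 1) Z t ∧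
        ccost r Q (fun _ => 1) Z ((1 + η) * t) ≤
          ENNReal.ofReal (1 + ε) * ccost r (Q \ QN) (fun _ => 1) Z t :=
  stmt14_general r hr L Δ d k hL hΔ hd hk ε η hε hη Q o ho hoOPT γ hγ Ps QN hQNQ hQN hpdisj hnum
    hsmall A hcube hcubedisj hfull hfull'
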